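/- Let p ∈ (0,1) with p ≠ 1/2 and let X be a Bernoulli(p) random variable. Then X is symmetry resistant: for every random variable Y independent of X with finite variance such that X + Y is symmetric around zero, one has Var(Y) ≥ Var(X). -/

import Mathlib

/-!
Duality. Let `U` be odd, of at most quadratic growth, with
`p U(y + 1) + (1 - p) U(y) ≤ y (y + 1)` for all `y`. Symmetry of `X + Y` and oddness of `U` give
`E U(X + Y) = 0`, while independence gives
`E U(X + Y) = p E U(Y + 1) + (1 - p) E U(Y) ≤ E[Y (Y + 1)] = E[Y²] - p`, since `E Y = -p`.
Hence `Var Y = E[Y²] - p² ≥ p - p² = Var X`.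

For `p > 1/2` such a `U` is the odd extension of a solution on `[0, ∞)` of the recurrence
`p f(y + 1) + (1 - p) f(y) = y (y + 1)`, whose homogeneous part oscillates like
`(-(1 - p) / p) ^ ⌊y⌋`; replacing `U` by `-U` exchanges `p` and `1 - p`.
-/

open MeasureTheory ProbabilityTheory

section Symmetric

variable {Ω E : Type*} [MeasurableSpace Ω] {μ : Measure Ω} [MeasurableSpace E] [Neg E]
  [MeasurableNeg E]

theorem integral_comp_eq_zero_of_map_eq_map_neg {Z : Ω → E} {f : E → ℝ}
    (hZ : AEMeasurable Z μ) (hf : Measurable f) (hf_odd : ∀ x, f (-x) = -f x)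
    (hsymm : μ.map Z = μ.map (fun ω => -Z ω)) :
    ∫ ω, f (Z ω) ∂μ = 0 := by
  refine self_eq_neg.mp ?_
  calc ∫ ω, f (Z ω) ∂μ = ∫ x, f x ∂(μ.map Z) := (integral_map hZ hf.aestronglyMeasurable).symm
    _ = ∫ x, f x ∂(μ.map (fun ω => -Z ω)) := by rw [hsymm]
    _ = ∫ ω, f (-Z ω) ∂μ := integral_map hZ.neg hf.aestronglyMeasurable
    _ = -∫ ω, f (Z ω) ∂μ := by simp only [hf_odd, integral_neg]

end Symmetric

section ZeroOne

variable {Ω : Type*} [MeasurableSpace Ω] {μ : Measure Ω} {X : Ω → ℝ}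

theorem ae_eq_zero_or_one_of_measure_eq [IsProbabilityMeasure μ] {p : ℝ}
    (hp : p ∈ Set.Icc (0 : ℝ) 1) (hX : Measurable X)
    (hX1 : μ {ω | X ω = 1} = ENNReal.ofReal p) (hX0 : μ {ω | X ω = 0} = ENNReal.ofReal (1 - p)) :
    ∀ᵐ ω ∂μ, X ω = 0 ∨ X ω = 1 := by
  have h0 : MeasurableSet {ω | X ω = 0} := hX (measurableSet_singleton 0)
  have h1 : MeasurableSet {ω | X ω = 1} := hX (measurableSet_singleton 1)
  have hdisj : Disjoint {ω | X ω = 0} {ω | X ω = 1} :=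
    Set.disjoint_left.mpr fun ω (h0 : X ω = 0) (h1 : X ω = 1) => by simp [h0] at h1
  refine (ae_iff_measure_eq ?_).mpr ?_
  · rw [Set.ofPred_or]; exact (h0.union h1).nullMeasurableSet
  rw [Set.ofPred_or, measure_union hdisj h1,
    hX0, hX1, ← ENNReal.ofReal_add (by linarith [hp.2]) hp.1, sub_add_cancel, measure_univ,
    ENNReal.ofReal_one]

theorem memLp_of_ae_eq_zero_or_one [IsFiniteMeasure μ] (hX01 : ∀ᵐ ω ∂μ, X ω = 0 ∨ X ω = 1)
    (hX : AEStronglyMeasurable X μ) (q : ENNReal) : MemLp X q μ :=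
  MemLp.of_bound hX 1 <| by filter_upwards [hX01] with ω h; rcases h with h | h <;> simp [h]

theorem integral_of_ae_eq_zero_or_one (hX01 : ∀ᵐ ω ∂μ, X ω = 0 ∨ X ω = 1)
    (hX : Measurable X) : μ[X] = μ.real {ω | X ω = 1} := by
  have h1 : MeasurableSet {ω | X ω = 1} := hX (measurableSet_singleton 1)
  rw [← integral_indicator_one h1]
  refine integral_congr_ae ?_
  filter_upwards [hX01] with ω h
  rcases h with h | h <;> simp [h]

theorem variance_of_ae_eq_zero_or_one [IsProbabilityMeasure μ]
    (hX01 : ∀ᵐ ω ∂μ, X ω = 0 ∨ X ω = 1) (hX : AEStronglyMeasurable X μ) :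
    variance X μ = μ[X] * (1 - μ[X]) := by
  have hsq : μ[X ^ 2] = μ[X] := integral_congr_ae <| by
    filter_upwards [hX01] with ω h; rcases h with h | h <;> simp [h]
  rw [variance_eq_sub (memLp_of_ae_eq_zero_or_one hX01 hX 2), hsq]
  ring

theorem integral_comp_add_of_ae_eq_zero_or_one [IsProbabilityMeasure μ] {Y : Ω → ℝ} {g : ℝ → ℝ}
    (hX01 : ∀ᵐ ω ∂μ, X ω = 0 ∨ X ω = 1) (hX : Measurable X)
    (hXY : IndepFun X Y μ) (hg : Measurable g) (hg1 : Integrable (fun ω => g (Y ω + 1)) μ)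
    (hg0 : Integrable (fun ω => g (Y ω)) μ) :
    ∫ ω, g (X ω + Y ω) ∂μ = μ[X] * ∫ ω, g (Y ω + 1) ∂μ + (1 - μ[X]) * ∫ ω, g (Y ω) ∂μ := by
  have hsplit : (fun ω => g (X ω + Y ω)) =ᵐ[μ]
      fun ω => X ω * g (Y ω + 1) + (1 - X ω) * g (Y ω) := by
    filter_upwards [hX01] with ω h
    rcases h with h | h <;> simp [h, add_comm]
  have hXint : Integrable X μ :=
    (memLp_of_ae_eq_zero_or_one hX01 hX.aestronglyMeasurable 1).integrable le_rfl
  have hI1 : IndepFun X (fun ω => g (Y ω + 1)) μ :=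
    hXY.comp measurable_id (hg.comp (measurable_add_const 1))
  have hI0 : IndepFun (fun ω => 1 - X ω) (fun ω => g (Y ω)) μ :=
    hXY.comp (measurable_const.sub measurable_id) hg
  have hint1 : Integrable (fun ω => X ω * g (Y ω + 1)) μ := hI1.integrable_mul hXint hg1
  have hint0 : Integrable (fun ω => (1 - X ω) * g (Y ω)) μ :=
    hI0.integrable_mul ((integrable_const 1).sub hXint) hg0
  have hE1 : ∫ ω, X ω * g (Y ω + 1) ∂μ = μ[X] * ∫ ω, g (Y ω + 1) ∂μ :=
    hI1.integral_mul_eq_mul_integral hX.aestronglyMeasurable hg1.aestronglyMeasurable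
  have hE0 : ∫ ω, (1 - X ω) * g (Y ω) ∂μ = (∫ ω, 1 - X ω ∂μ) * ∫ ω, g (Y ω) ∂μ :=
    hI0.integral_mul_eq_mul_integral (measurable_const.sub hX).aestronglyMeasurable
      hg0.aestronglyMeasurable
  rw [integral_congr_ae hsplit, integral_add hint1 hint0, hE1, hE0,
    integral_sub (integrable_const 1) hXint, integral_const, probReal_univ, one_smul]

end ZeroOne

section Certificate

variable {Ω : Type*} [MeasurableSpace Ω] {μ : Measure Ω}

theorem integrable_comp_of_abs_le [IsFiniteMeasure μ] {Y : Ω → ℝ} {U : ℝ → ℝ} {C : ℝ}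
    (hU : Measurable U) (hUC : ∀ y, |U y| ≤ C * (1 + y ^ 2)) (hY : MemLp Y 2 μ) :
    Integrable (fun ω => U (Y ω)) μ :=
  (((integrable_const 1).add hY.integrable_sq).const_mul C).mono'
    (hU.comp_aemeasurable hY.aestronglyMeasurable.aemeasurable).aestronglyMeasurable
    (ae_of_all _ fun ω => hUC (Y ω))

structure IsVarianceCertificate (p : ℝ) (U : ℝ → ℝ) : Prop where
  measurable : Measurable U
  odd : ∀ y, U (-y) = -U y
  abs_le : ∃ C, ∀ y, |U y| ≤ C * (1 + y ^ 2)
  le : ∀ y, p * U (y + 1) + (1 - p) * U y ≤ y * (y + 1)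

theorem IsVarianceCertificate.one_sub {p : ℝ} {U : ℝ → ℝ} (hU : IsVarianceCertificate p U) :
    IsVarianceCertificate (1 - p) (-U) where
  measurable := hU.measurable.neg
  odd y := by simp [hU.odd]
  abs_le := by simpa using hU.abs_le
  le y := by
    have h := hU.le (-y - 1)
    rw [show -y - 1 + 1 = -y by ring, show -y - 1 = -(y + 1) by ring, hU.odd, hU.odd] at h
    simp only [Pi.neg_apply]
    linarith

theorem IsVarianceCertificate.variance_le [IsProbabilityMeasure μ] {X Y : Ω → ℝ} {U : ℝ → ℝ}
    (hU : IsVarianceCertificate μ[X] U) (hX01 : ∀ᵐ ω ∂μ, X ω = 0 ∨ X ω = 1) (hX : Measurable X)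
    (hXY : IndepFun X Y μ) (hY2 : MemLp Y 2 μ)
    (hsymm : μ.map (fun ω => X ω + Y ω) = μ.map (fun ω => -(X ω + Y ω))) :
    variance X μ ≤ variance Y μ := by
  obtain ⟨C, hC⟩ := hU.abs_le
  have hXY_meas : AEMeasurable (fun ω => X ω + Y ω) μ :=
    hX.aemeasurable.add hY2.aestronglyMeasurable.aemeasurable
  have hXint : Integrable X μ :=
    (memLp_of_ae_eq_zero_or_one hX01 hX.aestronglyMeasurable 1).integrable le_rfl
  have hYint : Integrable Y μ := hY2.integrable one_le_two
  have hEY : μ[Y] = -μ[X] := by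
    have h : ∫ ω, X ω + Y ω ∂μ = 0 := integral_comp_eq_zero_of_map_eq_map_neg
      hXY_meas measurable_id (fun _ => rfl) hsymm
    rw [integral_add hXint hYint] at h
    linarith
  have hU1 : Integrable (fun ω => U (Y ω + 1)) μ :=
    integrable_comp_of_abs_le hU.measurable hC (hY2.add (memLp_const 1))
  have hU0 : Integrable (fun ω => U (Y ω)) μ := integrable_comp_of_abs_le hU.measurable hC hY2
  have hzero : μ[X] * ∫ ω, U (Y ω + 1) ∂μ + (1 - μ[X]) * ∫ ω, U (Y ω) ∂μ = 0 := by
    rw [← integral_comp_add_of_ae_eq_zero_or_one hX01 hX hXY hU.measurable hU1 hU0]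
    exact integral_comp_eq_zero_of_map_eq_map_neg hXY_meas hU.measurable hU.odd hsymm
  have hle : μ[X] * ∫ ω, U (Y ω + 1) ∂μ + (1 - μ[X]) * ∫ ω, U (Y ω) ∂μ ≤
      ∫ ω, Y ω ^ 2 ∂μ + μ[Y] := by
    rw [← integral_const_mul, ← integral_const_mul, ← integral_add (hU1.const_mul _)
      (hU0.const_mul _), ← integral_add hY2.integrable_sq hYint]
    exact integral_mono ((hU1.const_mul _).add (hU0.const_mul _))
      (hY2.integrable_sq.add hYint) fun ω => (hU.le (Y ω)).trans_eq (by ring)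
  rw [variance_of_ae_eq_zero_or_one hX01 hX.aestronglyMeasurable, variance_eq_sub hY2, hEY]
  simp only [Pi.pow_apply]
  nlinarith

end Certificate

namespace VarianceCertificate

variable {p : ℝ}

def particular (p y : ℝ) : ℝ := y ^ 2 - (2 * p - 1) * y - 2 * p * (1 - p)

noncomputable def profile (p t : ℝ) : ℝ :=
  2 * (1 - p) / (2 * p - 1) * (t ^ 2 - 2 * p * t + p * (2 * p - 1))

/-- The homogeneous part is normalised so that the certificate inequality is an equality for
`y ∈ (-1, 0)`. -/
noncomputable def halfLine (p y : ℝ) : ℝ :=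
  particular p y + (-((1 - p) / p)) ^ ⌊y⌋.toNat * profile p (Int.fract y)

theorem particular_rec (y : ℝ) :
    p * particular p (y + 1) + (1 - p) * particular p y = y * (y + 1) := by
  unfold particular; ring

theorem mul_halfLine_of_lt_one (hp : 2 * p - 1 ≠ 0) {t : ℝ} (h0 : 0 ≤ t) (h1 : t < 1) :
    (2 * p - 1) * halfLine p t = t * (t - 1) := by
  rw [halfLine, Int.fract_eq_self.mpr ⟨h0, h1⟩, Int.floor_eq_zero_iff.mpr ⟨h0, h1⟩]
  simp only [Int.toNat_zero, pow_zero, one_mul, particular, profile]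
  field_simp
  ring

theorem halfLine_zero (hp : 2 * p - 1 ≠ 0) : halfLine p 0 = 0 := by
  simpa [hp] using mul_halfLine_of_lt_one hp le_rfl one_pos

theorem halfLine_add_one {y : ℝ} (hy : 0 ≤ y) :
    halfLine p (y + 1) - particular p (y + 1) =
      -((1 - p) / p) * (halfLine p y - particular p y) := by
  have hfloor : ⌊y + 1⌋.toNat = ⌊y⌋.toNat + 1 := by
    have := Int.floor_nonneg.mpr hy
    rw [Int.floor_add_one]; omega
  simp only [halfLine, hfloor, Int.fract_add_one, pow_succ]
  ring

theorem halfLine_rec (hp : p ≠ 0) {y : ℝ} (hy : 0 ≤ y) :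
    p * halfLine p (y + 1) + (1 - p) * halfLine p y = y * (y + 1) := by
  have h := halfLine_add_one (p := p) hy
  rw [← particular_rec y]
  field_simp at h
  linear_combination h

theorem abs_profile_le (hp : 1 / 2 < p) (hp1 : p < 1) {t : ℝ} (h0 : 0 ≤ t) (h1 : t < 1) :
    |profile p t| ≤ 2 * (1 - p) / (2 * p - 1) := by
  have hK : 0 ≤ 2 * (1 - p) / (2 * p - 1) := div_nonneg (by linarith) (by linarith)
  have hq : |t ^ 2 - 2 * p * t + p * (2 * p - 1)| ≤ 1 := abs_le.mpr ⟨by nlinarith, by nlinarith⟩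
  rw [profile, abs_mul, abs_of_nonneg hK]
  exact mul_le_of_le_one_right hK hq

theorem abs_halfLine_sub_particular_le (hp : 1 / 2 < p) (hp1 : p < 1) (y : ℝ) :
    |halfLine p y - particular p y| ≤
      ((1 - p) / p) ^ ⌊y⌋.toNat * (2 * (1 - p) / (2 * p - 1)) := by
  rw [halfLine, add_sub_cancel_left, abs_mul, abs_pow, abs_neg,
    abs_of_nonneg (div_nonneg (by linarith) (by linarith) : 0 ≤ (1 - p) / p)]
  exact mul_le_mul_of_nonneg_left
    (abs_profile_le hp hp1 (Int.fract_nonneg y) (Int.fract_lt_one y)) (by positivity)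

theorem halfLine_add_halfLine_add_one_nonneg (hp : 1 / 2 < p) (hp1 : p < 1) {x : ℝ}
    (hx : 0 ≤ x) :
    0 ≤ halfLine p x + halfLine p (x + 1) := by
  have hp0 : 0 < p := by linarith
  have hd0 : 2 * p - 1 ≠ 0 := by linarith
  have hrec := halfLine_rec hp0.ne' hx
  rcases lt_or_ge x 1 with hx1 | hx1
  · have hkey : p * (halfLine p x + halfLine p (x + 1)) = 2 * x ^ 2 := by
      linear_combination hrec + mul_halfLine_of_lt_one hd0 hx hx1
    exact (mul_nonneg_iff_of_pos_left hp0).mp (hkey ▸ by positivity)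
  set r := (1 - p) / p with hr
  set K := 2 * (1 - p) / (2 * p - 1) with hK
  set d := halfLine p x - particular p x
  have hr0 : 0 ≤ r := div_nonneg (by linarith) hp0.le
  have hr1 : r ≤ 1 := (div_le_one hp0).mpr (by linarith)
  have hsum : halfLine p x + halfLine p (x + 1) =
      particular p x + particular p (x + 1) + (1 - r) * d := by
    linear_combination halfLine_add_one (p := p) hx
  have hdK : |d| ≤ r * K := by
    have hn : 1 ≤ ⌊x⌋.toNat := by
      have : (1 : ℤ) ≤ ⌊x⌋ := Int.le_floor.mpr (by simpa using hx1)
      omega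
    refine (abs_halfLine_sub_particular_le hp hp1 x).trans
      (mul_le_mul_of_nonneg_right ?_ (div_nonneg (by linarith) (by linarith)))
    simpa using pow_le_pow_of_le_one hr0 hr1 hn
  have hrK : (1 - r) * K = 2 * r := by
    rw [hr, hK, show 1 - (1 - p) / p = (2 * p - 1) / p by field_simp; ring]
    field_simp
  have hlow : -((1 - r) * (r * K)) ≤ (1 - r) * d := by
    have := neg_abs_le d
    nlinarith
  have hq : 2 ≤ particular p x + particular p (x + 1) := by
    unfold particular; nlinarith
  nlinarith

theorem abs_halfLine_le (hp : 1 / 2 < p) (hp1 : p < 1) (y : ℝ) :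
    |halfLine p y| ≤ (2 + 2 * (1 - p) / (2 * p - 1)) * (1 + y ^ 2) := by
  have hK : 0 ≤ 2 * (1 - p) / (2 * p - 1) := div_nonneg (by linarith) (by linarith)
  have hdiff : |halfLine p y - particular p y| ≤ 2 * (1 - p) / (2 * p - 1) := by
    refine (abs_halfLine_sub_particular_le hp hp1 y).trans (mul_le_of_le_one_left hK ?_)
    exact pow_le_one₀ (div_nonneg (by linarith) (by linarith))
      ((div_le_one (by linarith)).mpr (by linarith))
  have hpart : |particular p y| ≤ 2 * (1 + y ^ 2) := by
    unfold particular
    exact abs_le.mpr ⟨by nlinarith [sq_nonneg (y + 1), sq_nonneg (y - 1)],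
      by nlinarith [sq_nonneg (y + 1), sq_nonneg (y - 1)]⟩
  calc |halfLine p y| ≤ |particular p y| + |halfLine p y - particular p y| := by
        linarith [abs_sub_abs_le_abs_sub (halfLine p y) (particular p y)]
    _ ≤ 2 * (1 + y ^ 2) + 2 * (1 - p) / (2 * p - 1) * 1 := by linarith
    _ ≤ (2 + 2 * (1 - p) / (2 * p - 1)) * (1 + y ^ 2) := by nlinarith [sq_nonneg y]

theorem measurable_halfLine (p : ℝ) : Measurable (halfLine p) := by
  have hfloor : Measurable fun y : ℝ => ⌊y⌋.toNat :=
    (measurable_from_top (f := Int.toNat)).comp Int.measurable_floor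
  unfold halfLine particular profile
  fun_prop

noncomputable def certificate (p y : ℝ) : ℝ := if 0 ≤ y then halfLine p y else -halfLine p (-y)

theorem certificate_of_nonpos (hp : 2 * p - 1 ≠ 0) {y : ℝ} (hy : y ≤ 0) :
    certificate p y = -halfLine p (-y) := by
  rcases hy.lt_or_eq with hy | rfl
  · exact if_neg (not_le.mpr hy)
  · simp [certificate, halfLine_zero hp]

theorem certificate_neg (hp : 2 * p - 1 ≠ 0) (y : ℝ) : certificate p (-y) = -certificate p y := by
  rcases le_total 0 y with hy | hy
  · rw [certificate_of_nonpos hp (neg_nonpos.mpr hy), neg_neg, certificate, if_pos hy]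
  · rw [certificate_of_nonpos hp hy, neg_neg, certificate, if_pos (neg_nonneg.mpr hy)]

theorem certificate_le (hp : 1 / 2 < p) (hp1 : p < 1) (y : ℝ) :
    p * certificate p (y + 1) + (1 - p) * certificate p y ≤ y * (y + 1) := by
  have hd0 : 2 * p - 1 ≠ 0 := by linarith
  rcases le_or_gt 0 y with hy | hy
  · simp only [certificate, if_pos hy, if_pos (by linarith : (0 : ℝ) ≤ y + 1)]
    exact (halfLine_rec (by linarith) hy).le
  rcases lt_or_ge (-1) y with hy1 | hy1
  · rw [certificate, if_pos (by linarith), certificate_of_nonpos hd0 hy.le]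
    have h := mul_eq_zero.mp <| show (2 * p - 1) *
        (p * halfLine p (y + 1) + (1 - p) * -halfLine p (-y) - y * (y + 1)) = 0 by
      linear_combination p * mul_halfLine_of_lt_one hd0 (by linarith : 0 ≤ y + 1) (by linarith)
        - (1 - p) * mul_halfLine_of_lt_one hd0 (by linarith : 0 ≤ -y) (by linarith)
    exact (sub_eq_zero.mp (h.resolve_left hd0)).le
  · have hrec := halfLine_rec (p := p) (by linarith) (by linarith : 0 ≤ -y - 1)
    have hnn := halfLine_add_halfLine_add_one_nonneg hp hp1 (by linarith : 0 ≤ -y - 1)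
    rw [show -y - 1 + 1 = -y by ring] at hrec hnn
    rw [certificate_of_nonpos hd0 (by linarith), certificate_of_nonpos hd0 hy.le,
      show -(y + 1) = -y - 1 by ring]
    linarith

theorem isVarianceCertificate_certificate (hp : 1 / 2 < p) (hp1 : p < 1) :
    IsVarianceCertificate p (certificate p) where
  measurable := Measurable.ite (measurableSet_le measurable_const measurable_id)
    (measurable_halfLine p) ((measurable_halfLine p).comp measurable_neg).neg
  odd := certificate_neg (by linarith)
  abs_le := ⟨_, fun y => by
    unfold certificate
    split_ifs
    · exact abs_halfLine_le hp hp1 y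
    · simpa using abs_halfLine_le hp hp1 (-y)⟩
  le := certificate_le hp hp1

end VarianceCertificate

theorem exists_isVarianceCertificate {p : ℝ} (hp : p ∈ Set.Ioo (0 : ℝ) 1) (hp_ne : p ≠ 1 / 2) :
    ∃ U, IsVarianceCertificate p U := by
  rcases lt_or_gt_of_ne hp_ne with hlt | hgt
  · refine ⟨-VarianceCertificate.certificate (1 - p), ?_⟩
    have h := (VarianceCertificate.isVarianceCertificate_certificate (p := 1 - p)
      (by linarith) (by linarith [hp.1])).one_sub
    rwa [sub_sub_cancel] at h
  · exact ⟨_, VarianceCertificate.isVarianceCertificate_certificate hgt hp.2⟩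

/-- **Bernoulli(p) is symmetry resistant for `p ≠ 1/2`.**
Every symmetrizer `Y` of a Bernoulli(`p`) random variable `X` (i.e. `Y` independent of `X`,
with finite variance, such that `X + Y` is symmetric around zero) satisfies
`Var(Y) ≥ Var(X)`. -/
theorem bernoulli_symmetry_resistant
    {Ω : Type*} [MeasurableSpace Ω] (μ : Measure Ω) [IsProbabilityMeasure μ]
    (p : ℝ) (hp : p ∈ Set.Ioo (0 : ℝ) 1) (hp_ne : p ≠ 1 / 2)
    (X : Ω → ℝ) (hX : Measurable X)
    (hX1 : μ {ω | X ω = 1} = ENNReal.ofReal p)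
    (hX0 : μ {ω | X ω = 0} = ENNReal.ofReal (1 - p)) :
    ∀ Y : Ω → ℝ, Measurable Y → IndepFun X Y μ → MemLp Y 2 μ →
      μ.map (fun ω => X ω + Y ω) = μ.map (fun ω => -(X ω + Y ω)) →
      variance Y μ ≥ variance X μ := by
  intro Y hY hXY hY2 hsymm
  have hX01 := ae_eq_zero_or_one_of_measure_eq (Set.Ioo_subset_Icc_self hp) hX hX1 hX0
  have hEX : μ[X] = p := by
    rw [integral_of_ae_eq_zero_or_one hX01 hX, measureReal_def, hX1, ENNReal.toReal_ofReal hp.1.le]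
  obtain ⟨U, hU⟩ := exists_isVarianceCertificate hp hp_ne
  exact (hEX ▸ hU).variance_le hX01 hX hXY hY2 hsymm
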